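/- A claw-induced-saturated graph has at most one vertex of degree two. -/

import Mathlib

open SimpleGraph

/-- `G` contains an induced copy of `H`. -/
def HasInducedCopy {W V : Type*} (H : SimpleGraph W) (G : SimpleGraph V) : Prop :=
  Nonempty (H ↪g G)

/-- `G` is `H`-induced-saturated: `G` has no induced copy of `H`, but deleting any edge
or adding any non-edge creates an induced copy of `H`. -/
def IsIndSat {V W : Type*} (G : SimpleGraph V) (H : SimpleGraph W) : Prop :=
  ¬ HasInducedCopy H G ∧
  (∀ u v : V, G.Adj u v → HasInducedCopy H (G.deleteEdges {s(u, v)})) ∧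
  (∀ u v : V, u ≠ v → ¬ G.Adj u v →
    HasInducedCopy H (G ⊔ SimpleGraph.fromEdgeSet {s(u, v)}))

/-- The claw `K_{1,3}`: star with center `0` and leaves `1, 2, 3`. -/
def claw : SimpleGraph (Fin 4) :=
  SimpleGraph.fromRel (fun i _ => i = 0)

/-!
Deleting an edge `uv` of a claw-free graph can only create an induced claw in which `u, v` are
two leaves, so the centre `c` is a common neighbour of `u` and `v` with a third neighbour `w`.
Adding a non-edge `uv` can only create one in which `uv` is a centre–leaf edge, so `u` or `v`
has two non-adjacent neighbours. In a claw-induced-saturated graph, applying the first fact to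
the edges at a vertex `p` of degree two shows that the two neighbours of `p` are adjacent; by the
second fact, two vertices of degree two are therefore adjacent. But if `p` and `q` are adjacent
of degree two with common neighbour `b`, the centre for the edge `pb` must be `q`, which would
need a third neighbour.
-/

lemma claw_adj_iff (i j : Fin 4) : claw.Adj i j ↔ i ≠ j ∧ (i = 0 ∨ j = 0) := by
  simp [claw, SimpleGraph.fromRel_adj]

lemma claw_adj_zero {k : Fin 4} (hk : k ≠ 0) : claw.Adj 0 k :=
  (claw_adj_iff 0 k).2 ⟨hk.symm, Or.inl rfl⟩

lemma exists_claw_leaf_ne (i j : Fin 4) : ∃ k, k ≠ 0 ∧ k ≠ i ∧ k ≠ j := by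
  revert i j
  decide

lemma exists_not_adj_iff_of_not_hasInducedCopy {V W : Type*} {H : SimpleGraph W}
    {G G' : SimpleGraph V} (f : H ↪g G') (hG : ¬HasInducedCopy H G) :
    ∃ i j, ¬(G.Adj (f i) (f j) ↔ H.Adj i j) := by
  by_contra! hf
  exact hG ⟨⟨f.toEmbedding, hf _ _⟩⟩

section
variable {V : Type*} {G : SimpleGraph V} {u v : V}

lemma exists_adj_adj_of_hasInducedCopy_claw_deleteEdges (hG : ¬HasInducedCopy claw G)
    (hdel : HasInducedCopy claw (G.deleteEdges {s(u, v)})) :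
    ∃ c w, G.Adj u c ∧ G.Adj v c ∧ G.Adj c w ∧ w ≠ u ∧ w ≠ v := by
  obtain ⟨f⟩ := hdel
  have hle (i j : Fin 4) (hij : claw.Adj i j) : G.Adj (f i) (f j) :=
    (deleteEdges_adj.1 (f.map_rel_iff.2 hij)).1
  obtain ⟨i, j, hij⟩ := exists_not_adj_iff_of_not_hasInducedCopy f hG
  obtain ⟨hGij, hnij⟩ : G.Adj (f i) (f j) ∧ ¬claw.Adj i j := by
    by_cases hc : claw.Adj i j
    · exact absurd (iff_of_true (hle i j hc) hc) hij
    · exact ⟨by tauto, hc⟩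
  have hne : i ≠ j := fun h => hGij.ne (congrArg f h)
  have hs : s(f i, f j) = s(u, v) := by
    by_contra hs
    exact hnij (f.map_rel_iff.1 (deleteEdges_adj.2 ⟨hGij, hs⟩))
  have hi0 : i ≠ 0 := fun h => hnij ((claw_adj_iff i j).2 ⟨hne, Or.inl h⟩)
  have hj0 : j ≠ 0 := fun h => hnij ((claw_adj_iff i j).2 ⟨hne, Or.inr h⟩)
  obtain ⟨k, hk0, hki, hkj⟩ := exists_claw_leaf_ne i j
  have hki' : f k ≠ f i := f.injective.ne hki
  have hkj' : f k ≠ f j := f.injective.ne hkj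
  have hci := (hle 0 i (claw_adj_zero hi0)).symm
  have hcj := (hle 0 j (claw_adj_zero hj0)).symm
  rcases Sym2.eq_iff.1 hs with ⟨hu, hv⟩ | ⟨hv, hu⟩
  · rw [hu] at hci hki'
    rw [hv] at hcj hkj'
    exact ⟨f 0, f k, hci, hcj, hle 0 k (claw_adj_zero hk0), hki', hkj'⟩
  · rw [hu] at hcj hkj'
    rw [hv] at hci hki'
    exact ⟨f 0, f k, hcj, hci, hle 0 k (claw_adj_zero hk0), hkj', hki'⟩

lemma not_isClique_neighborSet_of_hasInducedCopy_claw_sup_edge (hG : ¬HasInducedCopy claw G)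
    (hadd : HasInducedCopy claw (G ⊔ fromEdgeSet {s(u, v)})) :
    ¬G.IsClique (G.neighborSet u) ∨ ¬G.IsClique (G.neighborSet v) := by
  obtain ⟨f⟩ := hadd
  have hge (i j : Fin 4) (hij : G.Adj (f i) (f j)) : claw.Adj i j :=
    f.map_rel_iff.1 (Or.inl hij)
  obtain ⟨i, j, hij⟩ := exists_not_adj_iff_of_not_hasInducedCopy f hG
  obtain ⟨l, hl0, hnl⟩ : ∃ l, l ≠ 0 ∧ ¬G.Adj (f 0) (f l) := by
    have hcij : claw.Adj i j := by_contra fun hc => hij (iff_of_false (mt (hge i j) hc) hc)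
    have hnG : ¬G.Adj (f i) (f j) := fun h => hij (iff_of_true h hcij)
    rcases (claw_adj_iff i j).1 hcij with ⟨hne, rfl | rfl⟩
    · exact ⟨j, hne.symm, hnG⟩
    · exact ⟨i, hne, fun h => hnG h.symm⟩
  have hs : s(f 0, f l) = s(u, v) := by
    rcases f.map_rel_iff.2 (claw_adj_zero hl0) with h | h
    · exact absurd h hnl
    · simpa using (fromEdgeSet_adj _).1 h |>.1
  have hleaf (m : Fin 4) (hm0 : m ≠ 0) (hml : m ≠ l) : G.Adj (f 0) (f m) := by
    rcases f.map_rel_iff.2 (claw_adj_zero hm0) with h | h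
    · exact h
    · have hm := (fromEdgeSet_adj _).1 h |>.1
      rw [Set.mem_singleton_iff] at hm
      exact absurd (f.injective (Sym2.congr_right.1 (hm.trans hs.symm))) hml
  obtain ⟨m, hm0, hml, -⟩ := exists_claw_leaf_ne l l
  obtain ⟨n, hn0, hnl, hnm⟩ := exists_claw_leaf_ne l m
  have hnot : ¬G.IsClique (G.neighborSet (f 0)) := by
    intro hcl
    have hmn := hge m n (hcl (hleaf m hm0 hml) (hleaf n hn0 hnl) (f.injective.ne hnm.symm))
    exact ((claw_adj_iff m n).1 hmn).2.elim hm0 hn0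
  rcases Sym2.eq_iff.1 hs with ⟨h, -⟩ | ⟨h, -⟩
  · exact Or.inl (h ▸ hnot)
  · exact Or.inr (h ▸ hnot)

lemma exists_neighborSet_eq_pair_of_degree_eq_two [Fintype (G.neighborSet v)]
    (hv : G.degree v = 2) : ∃ a b, a ≠ b ∧ G.neighborSet v = {a, b} := by
  classical
  obtain ⟨a, b, hab, hN⟩ := Finset.card_eq_two.1 hv
  exact ⟨a, b, hab, by rw [← coe_neighborFinset, hN, Finset.coe_pair]⟩

end

namespace IsIndSat

variable {V : Type*} {G : SimpleGraph V} {p q : V}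

lemma exists_adj_adj (h : IsIndSat G claw) (hpq : G.Adj p q) :
    ∃ c w, G.Adj p c ∧ G.Adj q c ∧ G.Adj c w ∧ w ≠ p ∧ w ≠ q :=
  exists_adj_adj_of_hasInducedCopy_claw_deleteEdges h.1 (h.2.1 p q hpq)

lemma isClique_neighborSet_of_degree_eq_two (h : IsIndSat G claw) [Fintype (G.neighborSet p)]
    (hp : G.degree p = 2) : G.IsClique (G.neighborSet p) := by
  obtain ⟨a, b, -, hN⟩ := exists_neighborSet_eq_pair_of_degree_eq_two hp
  have hpa : G.Adj p a := show a ∈ G.neighborSet p by simp [hN]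
  obtain ⟨c, -, hpc, hac, -⟩ := h.exists_adj_adj hpa
  have hc : c = a ∨ c = b := by simpa [hN] using (show c ∈ G.neighborSet p from hpc)
  rw [hN, isClique_pair]
  rcases hc with rfl | rfl
  · exact absurd rfl hac.ne
  · exact fun _ => hac

lemma adj_of_degree_eq_two (h : IsIndSat G claw) [Fintype (G.neighborSet p)]
    [Fintype (G.neighborSet q)] (hp : G.degree p = 2) (hq : G.degree q = 2) (hpq : p ≠ q) :
    G.Adj p q := by
  by_contra hnpq
  rcases not_isClique_neighborSet_of_hasInducedCopy_claw_sup_edge h.1 (h.2.2 p q hpq hnpq) with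
    hnp | hnq
  · exact hnp (h.isClique_neighborSet_of_degree_eq_two hp)
  · exact hnq (h.isClique_neighborSet_of_degree_eq_two hq)

lemma degree_ne_two_of_adj (h : IsIndSat G claw) [Fintype (G.neighborSet p)]
    [Fintype (G.neighborSet q)] (hp : G.degree p = 2) (hpq : G.Adj p q) : G.degree q ≠ 2 := by
  intro hq
  obtain ⟨b, hpb, hNp⟩ : ∃ b, G.Adj p b ∧ G.neighborSet p = {q, b} := by
    obtain ⟨a, b, -, hN⟩ := exists_neighborSet_eq_pair_of_degree_eq_two hp
    have hqN : q ∈ G.neighborSet p := hpq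
    rw [hN] at hqN
    rcases hqN with rfl | rfl
    · exact ⟨b, show b ∈ G.neighborSet p by simp [hN], hN⟩
    · exact ⟨a, show a ∈ G.neighborSet p by simp [hN], hN.trans (Set.pair_comm _ _)⟩
  obtain ⟨c, w, hpc, hbc, hcw, hwp, hwb⟩ := h.exists_adj_adj hpb
  have hcq : c = q := by
    have hc : c = q ∨ c = b := by simpa [hNp] using (show c ∈ G.neighborSet p from hpc)
    exact hc.resolve_right (fun hcb => hbc.ne hcb.symm)
  rw [hcq] at hpc hbc hcw
  obtain ⟨x, y, -, hNq⟩ := exists_neighborSet_eq_pair_of_degree_eq_two hq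
  have hmem (z : V) (hz : G.Adj q z) : z = x ∨ z = y := by
    simpa [hNq] using (show z ∈ G.neighborSet q from hz)
  have := hmem p hpc.symm
  have := hmem b hbc.symm
  have := hmem w hcw
  grind [hpb.ne]

end IsIndSat

/-- A claw-induced-saturated graph has at most one vertex of degree two. -/
theorem claw_indSat_degree_two_subsingleton {V : Type*} [Fintype V] (G : SimpleGraph V)
    [DecidableRel G.Adj] (h : IsIndSat G claw) :
    {v : V | G.degree v = 2}.Subsingleton := by
  intro p hp q hq
  by_contra hpq
  exact h.degree_ne_two_of_adj hp (h.adj_of_degree_eq_two hp hq hpq) hq
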